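/- arXiv:1508.02936 — 4 statements merged into one kernel-verified Lean document; each statement's English description precedes it below -/
import Mathlib

section
/- The function u(x,y) = y^{4/3} − x^{4/3} on ℝ² is C¹ but not C², and satisfies the infinity Laplace equation Δ_∞ u = ⟨D²u ∇u, ∇u⟩ = 0 pointwise at every point where it is twice differentiable (i.e., where x ≠ 0 and y ≠ 0). -/
/-!
Write `g t = |t| ^ (4/3)`, so that `u (x, y) = g y - g x`. By the chain rule for `|t| ^ p`
(`p > 1`), `g` is `C¹` with `g' t = (4/3) |t| ^ (-2/3) t`, whose difference quotient at `0`
blows up; so `g`, and with it `u`, is not `C²`. Since the variables separate,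
`Δ_∞ u (x, y) = g'(y)² g''(y) - g'(x)² g''(x)`, and for `|t| ^ p` one computes
`g'² g'' = p³ (p - 1) |t| ^ (3p - 4)`, which is constant precisely for `p = 4/3`.
-/

open Filter Topology

lemma sq_rpow_eq_abs_rpow (t q : ℝ) : (t ^ 2) ^ q = |t| ^ (2 * q) := by
  rw [← sq_abs, ← Real.rpow_natCast, ← Real.rpow_mul (abs_nonneg t), Nat.cast_ofNat]

lemma deriv_abs_rpow {p : ℝ} (hp : 1 < p) :
    deriv (fun t : ℝ => |t| ^ p) = fun t => p * |t| ^ (p - 2) * t :=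
  funext fun t => (hasDerivAt_abs_rpow t hp).deriv

lemma hasDerivAt_abs_rpow_mul_self (q : ℝ) {t : ℝ} (ht : t ≠ 0) :
    HasDerivAt (fun t : ℝ => |t| ^ q * t) ((q + 1) * |t| ^ q) t := by
  have ht' : 0 < |t| := abs_pos.2 ht
  have hsign : (SignType.sign t : ℝ) * t = |t| := by
    rcases ht.lt_or_gt with h | h <;> simp [h, abs_of_neg, abs_of_pos]
  refine (((hasDerivAt_abs ht).rpow_const (Or.inl ht'.ne')).mul (hasDerivAt_id' t)).congr_deriv ?_
  have hpow : |t| ^ (q - 1) * |t| = |t| ^ q := by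
    rw [← Real.rpow_add_one ht'.ne', sub_add_cancel]
  linear_combination q * |t| ^ (q - 1) * hsign + q * hpow

lemma hasDerivAt_deriv_abs_rpow {p : ℝ} (hp : 1 < p) {t : ℝ} (ht : t ≠ 0) :
    HasDerivAt (deriv fun t : ℝ => |t| ^ p) (p * (p - 1) * |t| ^ (p - 2)) t := by
  simp_rw [deriv_abs_rpow hp, mul_assoc]
  exact ((hasDerivAt_abs_rpow_mul_self (p - 2) ht).const_mul p).congr_deriv (by ring)

lemma not_differentiableAt_deriv_abs_rpow_zero {p : ℝ} (hp₁ : 1 < p) (hp₂ : p < 2) :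
    ¬ DifferentiableAt ℝ (deriv fun t : ℝ => |t| ^ p) 0 := by
  intro h
  have hslope : Tendsto (fun t : ℝ => p * t ^ (p - 2)) (𝓝[>] 0)
      (𝓝 (deriv (deriv fun t : ℝ => |t| ^ p) 0)) := by
    refine tendsto_nhdsWithin_congr (fun t (ht : 0 < t) => ?_)
      h.hasDerivAt.tendsto_slope_zero_right
    simp only [deriv_abs_rpow hp₁, zero_add, abs_of_pos ht, mul_zero, sub_zero, smul_eq_mul]
    field_simp
  have hblow : Tendsto (fun t : ℝ => p * t ^ (p - 2)) (𝓝[>] 0) atTop :=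
    (tendsto_rpow_neg_nhdsGT_zero (by linarith)).const_mul_atTop (by linarith)
  exact not_tendsto_nhds_of_tendsto_atTop hblow _ hslope

lemma not_contDiff_two_abs_rpow {p : ℝ} (hp₁ : 1 < p) (hp₂ : p < 2) :
    ¬ ContDiff ℝ 2 fun t : ℝ => |t| ^ p := by
  intro h
  have h' : ContDiff ℝ (1 + 1) fun t : ℝ => |t| ^ p := h
  exact not_differentiableAt_deriv_abs_rpow_zero hp₁ hp₂
    ((contDiff_succ_iff_deriv.1 h').2.2.differentiable one_ne_zero 0)

lemma deriv_sq_mul_deriv_deriv_abs_rpow {p : ℝ} (hp : 1 < p) {t : ℝ} (ht : t ≠ 0) :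
    deriv (fun t : ℝ => |t| ^ p) t ^ 2 * deriv (deriv fun t : ℝ => |t| ^ p) t =
      p ^ 3 * (p - 1) * |t| ^ (3 * p - 4) := by
  have hpow : |t| ^ (3 * p - 4) = (|t| ^ (p - 2)) ^ 3 * t ^ 2 := by
    rw [← sq_abs, ← Real.rpow_natCast, ← Real.rpow_natCast, ← Real.rpow_mul (abs_nonneg t),
      ← Real.rpow_add (abs_pos.2 ht)]
    congr 1
    push_cast
    ring
  rw [(hasDerivAt_deriv_abs_rpow hp ht).deriv, deriv_abs_rpow hp, hpow]
  ring

noncomputable def infinityLaplacian (u : ℝ × ℝ → ℝ) (p : ℝ × ℝ) : ℝ :=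
  (fderiv ℝ u p (1, 0)) ^ 2 * (fderiv ℝ (fun q => fderiv ℝ u q (1, 0)) p (1, 0)) +
    2 * (fderiv ℝ u p (1, 0)) * (fderiv ℝ u p (0, 1)) *
      (fderiv ℝ (fun q => fderiv ℝ u q (1, 0)) p (0, 1)) +
    (fderiv ℝ u p (0, 1)) ^ 2 * (fderiv ℝ (fun q => fderiv ℝ u q (0, 1)) p (0, 1))

lemma infinityLaplacian_comp_snd_sub_comp_fst {g : ℝ → ℝ} (hg : Differentiable ℝ g)
    {p : ℝ × ℝ} (hx : DifferentiableAt ℝ (deriv g) p.1) (hy : DifferentiableAt ℝ (deriv g) p.2) :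
    infinityLaplacian (fun q => g q.2 - g q.1) p =
      deriv g p.2 ^ 2 * deriv (deriv g) p.2 - deriv g p.1 ^ 2 * deriv (deriv g) p.1 := by
  have hu (q : ℝ × ℝ) : HasFDerivAt (fun q : ℝ × ℝ => g q.2 - g q.1)
      (deriv g q.2 • ContinuousLinearMap.snd ℝ ℝ ℝ -
        deriv g q.1 • ContinuousLinearMap.fst ℝ ℝ ℝ) q :=
    ((hg q.2).hasDerivAt.comp_hasFDerivAt q hasFDerivAt_snd).sub
      ((hg q.1).hasDerivAt.comp_hasFDerivAt q hasFDerivAt_fst)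
  have hux : (fun q => fderiv ℝ (fun q : ℝ × ℝ => g q.2 - g q.1) q (1, 0)) =
      fun q => -deriv g q.1 := funext fun q => by simp [(hu q).fderiv]
  have huy : (fun q => fderiv ℝ (fun q : ℝ × ℝ => g q.2 - g q.1) q (0, 1)) =
      fun q => deriv g q.2 := funext fun q => by simp [(hu q).fderiv]
  have huxx : HasFDerivAt (fun q : ℝ × ℝ => -deriv g q.1)
      (-(deriv (deriv g) p.1 • ContinuousLinearMap.fst ℝ ℝ ℝ)) p :=
    (hx.hasDerivAt.comp_hasFDerivAt p hasFDerivAt_fst).neg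
  have huyy : HasFDerivAt (fun q : ℝ × ℝ => deriv g q.2)
      (deriv (deriv g) p.2 • ContinuousLinearMap.snd ℝ ℝ ℝ) p :=
    hy.hasDerivAt.comp_hasFDerivAt p hasFDerivAt_snd
  simp only [infinityLaplacian, hux, huy]
  rw [huxx.fderiv, huyy.fderiv, (hu p).fderiv]
  simp only [sub_apply, smul_apply, neg_apply,
    ContinuousLinearMap.coe_fst', ContinuousLinearMap.coe_snd', smul_eq_mul]
  ring

/-- the function `u(x,y) = y^{4/3} − x^{4/3}` (interpreted as
`(y²)^{2/3} − (x²)^{2/3}`) is `C¹` but not `C²` on `ℝ²`, and satisfies the infinity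
Laplace equation `u_x² u_{xx} + 2 u_x u_y u_{xy} + u_y² u_{yy} = 0` at every point
where `x ≠ 0` and `y ≠ 0`. -/
theorem stmt7 (u : ℝ × ℝ → ℝ)
    (hu : ∀ p : ℝ × ℝ, u p = (p.2 ^ 2) ^ (2 / 3 : ℝ) - (p.1 ^ 2) ^ (2 / 3 : ℝ)) :
    ContDiff ℝ 1 u ∧ ¬ ContDiff ℝ 2 u ∧
    ∀ p : ℝ × ℝ, p.1 ≠ 0 → p.2 ≠ 0 →
      (fderiv ℝ u p (1, 0)) ^ 2 * (fderiv ℝ (fun q => fderiv ℝ u q (1, 0)) p (1, 0)) +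
        2 * (fderiv ℝ u p (1, 0)) * (fderiv ℝ u p (0, 1)) *
          (fderiv ℝ (fun q => fderiv ℝ u q (1, 0)) p (0, 1)) +
        (fderiv ℝ u p (0, 1)) ^ 2 * (fderiv ℝ (fun q => fderiv ℝ u q (0, 1)) p (0, 1)) = 0 := by
  have hp : (1 : ℝ) < 4 / 3 := by norm_num
  set g : ℝ → ℝ := fun t => |t| ^ (4 / 3 : ℝ)
  have hug : u = fun q => g q.2 - g q.1 := by
    ext q; rw [hu, sq_rpow_eq_abs_rpow, sq_rpow_eq_abs_rpow]; norm_num [g]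
  have hgC1 : ContDiff ℝ 1 g := by simpa using contDiff_norm_rpow (E := ℝ) hp
  refine ⟨hug ▸ (hgC1.comp contDiff_snd).sub (hgC1.comp contDiff_fst), fun hu2 => ?_,
    fun p hx hy => ?_⟩
  · refine not_contDiff_two_abs_rpow hp (by norm_num) (?_ : ContDiff ℝ 2 g)
    have : g = fun t => u (0, t) := by simp [hug, g]
    rw [this]
    exact hu2.comp (contDiff_const.prodMk contDiff_id)
  · show infinityLaplacian u p = 0
    rw [hug, infinityLaplacian_comp_snd_sub_comp_fst (hgC1.differentiable one_ne_zero)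
      (hasDerivAt_deriv_abs_rpow hp hx).differentiableAt
      (hasDerivAt_deriv_abs_rpow hp hy).differentiableAt,
      deriv_sq_mul_deriv_deriv_abs_rpow hp hx, deriv_sq_mul_deriv_deriv_abs_rpow hp hy]
    norm_num
end

section
/- Let F be an admissible Finsler structure on Ω with intrinsic distance δ_F. If u ∈ Lip(Ω) satisfies ess sup_{x∈Ω} F(x, ∇u(x)) ≤ 1, then the pointwise Lipschitz constant with respect to δ_F satisfies Lip_{δ_F} u(x) ≤ 1 for every x ∈ Ω. -/
open MeasureTheory Filter Topology Set

/-- The intrinsic distance `δ_F(x,y) := sup {v(x) − v(y) : v ∈ Lip(Ω),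
ess sup F(·,∇v) ≤ 1}` associated to a Finsler structure `F` on `Ω`. -/
noncomputable def deltaF {n : ℕ} (F : EuclideanSpace ℝ (Fin n) → EuclideanSpace ℝ (Fin n) → ℝ)
    (Ω : Set (EuclideanSpace ℝ (Fin n))) (x y : EuclideanSpace ℝ (Fin n)) : ℝ :=
  sSup {t : ℝ | ∃ w : EuclideanSpace ℝ (Fin n) → ℝ,
    (∃ K : NNReal, LipschitzOnWith K w Ω) ∧
    (∀ᵐ z ∂(volume.restrict Ω), F z (gradient w z) ≤ 1) ∧
    t = w x - w y}

theorem gradient_fun_neg {𝕜 E : Type*} [RCLike 𝕜] [NormedAddCommGroup E] [InnerProductSpace 𝕜 E]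
    [CompleteSpace E] (f : E → 𝕜) (x : E) :
    gradient (fun y => -f y) x = -gradient f x := by
  simp only [gradient, fderiv_fun_neg, map_neg]

/-- The second alternative is the junk value `sSup S = 0` of a set not bounded above. -/
theorem Real.abs_le_sSup_or_sSup_eq_zero {S : Set ℝ} {a : ℝ} (ha : a ∈ S) (hna : -a ∈ S) :
    |a| ≤ sSup S ∨ sSup S = 0 := by
  by_cases hS : BddAbove S
  · exact Or.inl (abs_le'.2 ⟨le_csSup hS ha, le_csSup hS hna⟩)
  · exact Or.inr (Real.sSup_of_not_bddAbove hS)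

theorem IsOpen.nhdsWithin_diff_singleton_neBot {E : Type*} [NormedAddCommGroup E]
    [NormedSpace ℝ E] [Nontrivial E] {s : Set E} (hs : IsOpen s) {x : E} (hx : x ∈ s) :
    (𝓝[s \ {x}] x).NeBot := by
  rw [sdiff_eq, nhdsWithin_inter_of_mem (mem_nhdsWithin_of_mem_nhds (hs.mem_nhds hx))]
  exact Module.punctured_nhds_neBot ℝ E x

section deltaF

variable {n : ℕ} {F : EuclideanSpace ℝ (Fin n) → EuclideanSpace ℝ (Fin n) → ℝ}
  {Ω : Set (EuclideanSpace ℝ (Fin n))} {u : EuclideanSpace ℝ (Fin n) → ℝ}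

/-- Both `u` and `-u` are competitors in the supremum defining `δ_F`. -/
theorem abs_sub_le_deltaF_or_deltaF_eq_zero
    (hsymm : ∀ᵐ z ∂(volume.restrict Ω), ∀ v, F z (-v) = F z v)
    (hu : ∃ K : NNReal, LipschitzOnWith K u Ω)
    (hu1 : ∀ᵐ z ∂(volume.restrict Ω), F z (gradient u z) ≤ 1) (x y : EuclideanSpace ℝ (Fin n)) :
    |u y - u x| ≤ deltaF F Ω x y ∨ deltaF F Ω x y = 0 := by
  have hu1_neg : ∀ᵐ z ∂(volume.restrict Ω), F z (gradient (fun w => -u w) z) ≤ 1 := by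
    filter_upwards [hu1, hsymm] with z hz hz_symm
    rwa [gradient_fun_neg, hz_symm]
  rw [abs_sub_comm]
  obtain ⟨K, hK⟩ := hu
  exact Real.abs_le_sSup_or_sSup_eq_zero ⟨u, ⟨K, hK⟩, hu1, rfl⟩
    ⟨fun w => -u w, ⟨K, hK.neg⟩, hu1_neg, by ring⟩

theorem abs_sub_div_deltaF_mem_Icc
    (hsymm : ∀ᵐ z ∂(volume.restrict Ω), ∀ v, F z (-v) = F z v)
    (hu : ∃ K : NNReal, LipschitzOnWith K u Ω)
    (hu1 : ∀ᵐ z ∂(volume.restrict Ω), F z (gradient u z) ≤ 1) (x y : EuclideanSpace ℝ (Fin n)) :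
    |u y - u x| / deltaF F Ω x y ∈ Icc 0 1 := by
  rcases abs_sub_le_deltaF_or_deltaF_eq_zero hsymm hu hu1 x y with hle | hzero
  · have hδ : 0 ≤ deltaF F Ω x y := (abs_nonneg _).trans hle
    exact ⟨div_nonneg (abs_nonneg _) hδ, div_le_one_of_le₀ hle hδ⟩
  · simp [hzero]

end deltaF

theorem stmt9_general {n : ℕ} (hn : 2 ≤ n) (Ω : Set (EuclideanSpace ℝ (Fin n)))
    (hΩopen : IsOpen Ω)
    (F : EuclideanSpace ℝ (Fin n) → EuclideanSpace ℝ (Fin n) → ℝ)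
    (lam : EuclideanSpace ℝ (Fin n) → ℝ)
    (hae : ∀ᵐ x ∂(volume.restrict Ω),
      (∀ v, F x v = 0 ↔ v = 0) ∧
      (∀ (c : ℝ) (v), F x (c • v) = |c| * F x v) ∧
      (∀ v w, F x (v + w) ≤ F x v + F x w) ∧
      (∀ v, (lam x)⁻¹ * ‖v‖ ≤ F x v ∧ F x v ≤ lam x * ‖v‖))
    (u : EuclideanSpace ℝ (Fin n) → ℝ)
    (hu : ∃ K : NNReal, LipschitzOnWith K u Ω)
    (hu1 : ∀ᵐ x ∂(volume.restrict Ω), F x (gradient u x) ≤ 1) :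
    ∀ x ∈ Ω,
      Filter.limsup (fun y => |u y - u x| / deltaF F Ω x y) (nhdsWithin x (Ω \ {x})) ≤ 1 := by
  intro x hx
  have hsymm : ∀ᵐ z ∂(volume.restrict Ω), ∀ v, F z (-v) = F z v := by
    filter_upwards [hae] with z hz v
    simpa using hz.2.1 (-1) v
  have hratio := abs_sub_div_deltaF_mem_Icc hsymm hu hu1 x
  have : NeZero n := ⟨by omega⟩
  have := hΩopen.nhdsWithin_diff_singleton_neBot hx
  exact limsup_le_of_le (isCoboundedUnder_le_of_le _ fun y => (hratio y).1)
    (Eventually.of_forall fun y => (hratio y).2)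

/-- if `u` is Lipschitz on `Ω` with `ess sup_{x∈Ω} F(x,∇u(x)) ≤ 1`, then
the pointwise Lipschitz constant of `u` with respect to `δ_F` is at most `1`
everywhere on `Ω`. -/
theorem stmt9 {n : ℕ} (hn : 2 ≤ n) (Ω : Set (EuclideanSpace ℝ (Fin n)))
    (hΩopen : IsOpen Ω) (hΩconn : IsConnected Ω)
    (F : EuclideanSpace ℝ (Fin n) → EuclideanSpace ℝ (Fin n) → ℝ)
    (hF0 : ∀ x v, 0 ≤ F x v)
    (hmeas : ∀ v, Measurable fun x => F x v)
    (lam : EuclideanSpace ℝ (Fin n) → ℝ)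
    (hlam_cont : ContinuousOn lam Ω) (hlam1 : ∀ x ∈ Ω, 1 ≤ lam x)
    (hae : ∀ᵐ x ∂(volume.restrict Ω),
      (∀ v, F x v = 0 ↔ v = 0) ∧
      (∀ (c : ℝ) (v), F x (c • v) = |c| * F x v) ∧
      (∀ v w, F x (v + w) ≤ F x v + F x w) ∧
      (∀ v, (lam x)⁻¹ * ‖v‖ ≤ F x v ∧ F x v ≤ lam x * ‖v‖))
    (u : EuclideanSpace ℝ (Fin n) → ℝ)
    (hu : ∃ K : NNReal, LipschitzOnWith K u Ω)
    (hu1 : ∀ᵐ x ∂(volume.restrict Ω), F x (gradient u x) ≤ 1) :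
    ∀ x ∈ Ω,
      Filter.limsup (fun y => |u y - u x| / deltaF F Ω x y) (nhdsWithin x (Ω \ {x})) ≤ 1 :=
  stmt9_general hn Ω hΩopen F lam hae u hu hu1
end

section
/- Let (X,d) be a geodesic metric space, W ⊂ X open and bounded with nonempty boundary, and V ⊃ W̄. Let u: V → ℝ be continuous. If the Lipschitz constant of u on ∂W (with respect to d) equals the Lipschitz constant of u on W̄, and u(x) > b + a·d(x, x₀) for all x ∈ W while u = b + a·d(·, x₀) on ∂W, where x₀ ∉ W̄ and a ≥ 0, then W is empty. (Comparison with cones from above follows from the Lipschitz extension property Lip(u, V) = Lip(u, ∂V).) -/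
open Set Metric

/-- in a geodesic metric space, if `u` is continuous on `V ⊇ closure W`,
the Lipschitz constant of `u` on `∂W` equals that on `closure W`, `u` strictly exceeds
the cone `b + a·d(·,x₀)` on the open bounded set `W` while agreeing with it on `∂W`,
with vertex `x₀ ∉ closure W` and slope `a ≥ 0`, then `W` is empty. -/
theorem stmt11 {X : Type*} [MetricSpace X]
    (hgeo : ∀ x y : X, ∃ γ : ℝ → X, γ 0 = x ∧ γ 1 = y ∧
      ∀ s ∈ Icc (0 : ℝ) 1, ∀ t ∈ Icc (0 : ℝ) 1, dist (γ s) (γ t) = |s - t| * dist x y)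
    (W V : Set X) (hW : IsOpen W) (hWb : Bornology.IsBounded W)
    (hWV : closure W ⊆ V)
    (u : X → ℝ) (hu : ContinuousOn u V)
    (x₀ : X) (hx₀ : x₀ ∉ closure W) (a b : ℝ) (ha : 0 ≤ a)
    (hLipEq :
      (⨆ p ∈ frontier W, ⨆ q ∈ frontier W, ENNReal.ofReal (|u p - u q| / dist p q)) =
        ⨆ p ∈ closure W, ⨆ q ∈ closure W, ENNReal.ofReal (|u p - u q| / dist p q))
    (hgt : ∀ x ∈ W, b + a * dist x x₀ < u x)
    (hbd : ∀ x ∈ frontier W, u x = b + a * dist x x₀) :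
    W = ∅ := by
  by_contra hne
  obtain ⟨x, hx⟩ := nonempty_iff_ne_empty.mpr hne
  obtain ⟨γ, hγ0, hγ1, hγd⟩ := hgeo x₀ x
  -- γ is continuous on [0,1]
  have hcont : ContinuousOn γ (Icc (0:ℝ) 1) := by
    have hlip : LipschitzOnWith (Real.toNNReal (dist x₀ x)) γ (Icc (0:ℝ) 1) := by
      apply LipschitzOnWith.of_dist_le_mul
      intro s hs t ht
      rw [hγd s hs t ht, Real.coe_toNNReal _ dist_nonneg, Real.dist_eq, mul_comm]
    exact hlip.continuousOn
  have hpc : IsPreconnected (γ '' Icc (0:ℝ) 1) := isPreconnected_Icc.image γ hcont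
  -- the geodesic crosses the frontier of W
  have key : ∃ t ∈ Icc (0:ℝ) 1, γ t ∈ frontier W := by
    by_contra h
    push_neg at h
    have hsub : γ '' Icc (0:ℝ) 1 ⊆ W ∪ (closure W)ᶜ := by
      rintro z ⟨t, ht, rfl⟩
      by_cases hzW : γ t ∈ W
      · exact Or.inl hzW
      · by_cases hzC : γ t ∈ closure W
        · exact absurd (by rw [hW.frontier_eq]; exact ⟨hzC, hzW⟩) (h t ht)
        · exact Or.inr hzC
    have h1 : ((γ '' Icc (0:ℝ) 1) ∩ W).Nonempty :=
      ⟨x, ⟨1, right_mem_Icc.mpr zero_le_one, hγ1⟩, hx⟩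
    have h2 : ((γ '' Icc (0:ℝ) 1) ∩ (closure W)ᶜ).Nonempty :=
      ⟨x₀, ⟨0, left_mem_Icc.mpr zero_le_one, hγ0⟩, hx₀⟩
    obtain ⟨z, _, hzW, hzC⟩ := hpc W (closure W)ᶜ hW isClosed_closure.isOpen_compl hsub h1 h2
    exact hzC (subset_closure hzW)
  obtain ⟨t, ht, htf⟩ := key
  set z := γ t with hz
  have hzW : z ∉ W := by
    rw [hW.frontier_eq] at htf; exact htf.2
  have hxz : x ≠ z := fun h => hzW (h ▸ hx)
  have hdpos : (0:ℝ) < dist x z := dist_pos.mpr hxz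
  -- metric identity: dist x₀ x = dist x₀ z + dist z x
  have hmet : dist x x₀ = dist z x₀ + dist x z := by
    have h0t : dist x₀ z = t * dist x₀ x := by
      have h := hγd 0 (left_mem_Icc.mpr zero_le_one) t ht
      rw [hγ0] at h
      rw [hz, h, abs_of_nonpos (by linarith [ht.1]), neg_sub, sub_zero]
    have ht1 : dist z x = (1 - t) * dist x₀ x := by
      have h := hγd t ht 1 (right_mem_Icc.mpr zero_le_one)
      rw [hγ1] at h
      rw [hz, h, abs_of_nonpos (by linarith [ht.2])]
      ring_nf
    rw [dist_comm x x₀, dist_comm z x₀, dist_comm x z, h0t, ht1]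
    ring
  -- key strict inequality
  have hkey : a * dist x z < u x - u z := by
    have h1 := hgt x hx
    have h2 := hbd z htf
    rw [h2]
    nlinarith [hmet]
  -- the ratio at (x, z) strictly exceeds a
  have hratio : a < |u x - u z| / dist x z := by
    rw [abs_of_pos (by nlinarith [mul_nonneg ha hdpos.le])]
    rw [lt_div_iff₀ hdpos]
    linarith
  -- LHS ≤ ofReal a
  have hLHS : (⨆ p ∈ frontier W, ⨆ q ∈ frontier W, ENNReal.ofReal (|u p - u q| / dist p q))
      ≤ ENNReal.ofReal a := by
    refine iSup₂_le fun p hp => iSup₂_le fun q hq => ?_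
    apply ENNReal.ofReal_le_ofReal
    rcases eq_or_ne p q with rfl | hpq
    · simp [ha]
    · have hd : (0:ℝ) < dist p q := dist_pos.mpr hpq
      rw [div_le_iff₀ hd, hbd p hp, hbd q hq]
      have : b + a * dist p x₀ - (b + a * dist q x₀) = a * (dist p x₀ - dist q x₀) := by ring
      rw [this, abs_mul, abs_of_nonneg ha]
      exact mul_le_mul_of_nonneg_left (abs_dist_sub_le p q x₀) ha
  -- RHS ≥ ofReal (ratio at (x,z))
  have hRHS : ENNReal.ofReal (|u x - u z| / dist x z)
      ≤ ⨆ p ∈ closure W, ⨆ q ∈ closure W, ENNReal.ofReal (|u p - u q| / dist p q) := by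
    have hxc : x ∈ closure W := subset_closure hx
    have hzc : z ∈ closure W := htf.1
    calc ENNReal.ofReal (|u x - u z| / dist x z)
        ≤ ⨆ q ∈ closure W, ENNReal.ofReal (|u x - u q| / dist x q) :=
          le_iSup₂ (f := fun q (_ : q ∈ closure W) => ENNReal.ofReal (|u x - u q| / dist x q))
            z hzc
      _ ≤ ⨆ p ∈ closure W, ⨆ q ∈ closure W, ENNReal.ofReal (|u p - u q| / dist p q) :=
          le_iSup₂ (f := fun p (_ : p ∈ closure W) =>
            ⨆ q ∈ closure W, ENNReal.ofReal (|u p - u q| / dist p q)) x hxc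
  have hlt : ENNReal.ofReal a < ENNReal.ofReal (|u x - u z| / dist x z) :=
    ENNReal.ofReal_lt_ofReal_iff (lt_of_le_of_lt ha hratio) |>.mpr hratio
  have := lt_irrefl (ENNReal.ofReal a)
    (lt_of_lt_of_le hlt (hRHS.trans (hLipEq ▸ hLHS)))
  exact this
end

section
/- Let (X,d) be a geodesic metric space, U ⊂ X open, and u: U → ℝ locally Lipschitz. Suppose for a bounded open V with V̄ ⊂ U we have sup_{x ∈ V} Lip_d u(x) ≤ L_{∂V} := Lip_d(u, ∂V), where Lip_d u(x) is the pointwise Lipschitz constant. Then Lip_d(u, V) ≤ Lip_d(u, ∂V): for any x, y ∈ V, |u(x) − u(y)| ≤ Lip_d(u, ∂V)·d(x,y). -/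
open Set Metric Filter Topology

/-!
Join `x` and `y` by a constant-speed geodesic `γ` and fix `M > L`. While `γ` stays in `V`, the
pointwise bound makes `t ↦ |u (γ t) - u x|` grow with right slopes at most `M · d(x, y)`, so
the fencing theorem for continuous functions bounds the increment of `u` along `γ` by `M` times
the length travelled. If `γ` leaves `V`, cut it at its first and last boundary points: the two
outer pieces are controlled by `M`, the middle one by the Lipschitz constant `L` on `∂V`, and the
three lengths add up to `d(x, y)`. Finally let `M ↓ L`.
-/

theorem abs_sub_le_mul_of_eventually_nhdsGT {φ : ℝ → ℝ} {a b C : ℝ}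
    (hφ : ContinuousOn φ (Icc a b))
    (hloc : ∀ t ∈ Ico a b, ∀ᶠ s in 𝓝[>] t, |φ s - φ t| ≤ C * (s - t)) :
    ∀ ⦃t⦄, t ∈ Icc a b → |φ t - φ a| ≤ C * (t - a) := by
  refine image_le_of_liminf_slope_right_le_deriv_boundary (f := fun t => |φ t - φ a|)
    (B' := fun _ => C) (hφ.sub continuousOn_const).abs (by simp) (by fun_prop)
    (fun t _ => ((hasDerivAt_id t).sub_const a).const_mul C |>.hasDerivWithinAt |>.congr_deriv
      (mul_one C)) fun t ht r hr => Eventually.frequently ?_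
  filter_upwards [hloc t ht, self_mem_nhdsWithin] with s hs hts
  have hst : 0 < s - t := sub_pos.2 hts
  rw [slope_def_field, div_lt_iff₀ hst]
  calc |φ s - φ a| - |φ t - φ a| ≤ |φ s - φ t| := by
        simpa using abs_sub_abs_le_abs_sub (φ s - φ a) (φ t - φ a)
    _ ≤ C * (s - t) := hs
    _ < r * (s - t) := mul_lt_mul_of_pos_right hr hst

theorem le_mul_of_forall_lt_imp_le_mul {c L d : ℝ} (h : ∀ M, L < M → c ≤ M * d) :
    c ≤ L * d :=
  ge_of_tendsto ((continuous_mul_const d).tendsto L |>.mono_left nhdsWithin_le_nhds)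
    (eventually_nhdsWithin_of_forall (s := Ioi L) h)

theorem exists_mem_Ioc_mem_frontier_of_mem_of_notMem {X : Type*} [TopologicalSpace X]
    {V : Set X} (hV : IsOpen V) {γ : ℝ → X} {a b : ℝ} (hab : a ≤ b)
    (hγ : ContinuousOn γ (Icc a b)) (ha : γ a ∈ V) (hb : γ b ∉ V) :
    ∃ c ∈ Ioc a b, γ c ∈ frontier V ∧ ∀ t ∈ Ico a c, γ t ∈ V := by
  set E := Icc a b ∩ γ ⁻¹' Vᶜ
  have hbE : b ∈ E := ⟨⟨hab, le_rfl⟩, hb⟩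
  have hEbdd : BddBelow E := ⟨a, fun t ht => ht.1.1⟩
  have hcE : sInf E ∈ E :=
    (hγ.preimage_isClosed_of_isClosed isClosed_Icc hV.isClosed_compl).csInf_mem ⟨b, hbE⟩ hEbdd
  have hac : a < sInf E := hcE.1.1.lt_of_ne fun h => hcE.2 (h ▸ ha)
  have hbefore : ∀ t ∈ Ico a (sInf E), γ t ∈ V := fun t ht => by
    by_contra h
    exact ht.2.not_ge (csInf_le hEbdd ⟨⟨ht.1, ht.2.le.trans hcE.1.2⟩, h⟩)
  refine ⟨sInf E, ⟨hac, hcE.1.2⟩, ?_, hbefore⟩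
  have hlim : Tendsto γ (𝓝[<] sInf E) (𝓝 (γ (sInf E))) :=
    ((hγ _ hcE.1).mono_of_mem_nhdsWithin (Icc_mem_nhdsLT_of_mem ⟨hac, hcE.1.2⟩)).tendsto
  rw [hV.frontier_eq]
  exact ⟨mem_closure_of_tendsto hlim (mem_of_superset (Ico_mem_nhdsLT hac) hbefore), hcE.2⟩

theorem abs_sub_le_mul_dist_of_mem_upperBounds {X : Type*} [MetricSpace X] {S : Set X}
    {u : X → ℝ} {L : ℝ}
    (hL : L ∈ upperBounds {r | ∃ p ∈ S, ∃ q ∈ S, r = |u p - u q| / dist p q})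
    {p q : X} (hp : p ∈ S) (hq : q ∈ S) : |u p - u q| ≤ L * dist p q := by
  rcases eq_or_ne p q with rfl | hpq
  · simp
  · exact (div_le_iff₀ (dist_pos.2 hpq)).1 (hL ⟨p, hp, q, hq, rfl⟩)

theorem eventually_abs_sub_le_mul_dist_of_limsup_lt {X : Type*} [MetricSpace X] {u : X → ℝ}
    {z : X} {s : Set X} {K : NNReal} (hs : s ∈ 𝓝 z) (hK : LipschitzOnWith K u s) {M : ℝ}
    (hM : limsup (fun w => |u w - u z| / dist w z) (𝓝[≠] z) < M) :
    ∀ᶠ w in 𝓝 z, |u w - u z| ≤ M * dist w z := by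
  have hbdd : IsBoundedUnder (· ≤ ·) (𝓝[≠] z) (fun w => |u w - u z| / dist w z) := by
    refine isBoundedUnder_of_eventually_le (a := (K : ℝ)) ?_
    filter_upwards [mem_nhdsWithin_of_mem_nhds hs] with w hw
    refine div_le_of_le_mul₀ dist_nonneg K.coe_nonneg ?_
    simpa [Real.dist_eq] using hK.dist_le_mul w hw z (mem_of_mem_nhds hs)
  filter_upwards [eventually_nhdsWithin_iff.1 (eventually_lt_of_limsup_lt hM hbdd)] with w hw
  rcases eq_or_ne w z with rfl | hwz
  · simp
  · exact ((div_lt_iff₀ (dist_pos.2 hwz)).1 (hw hwz)).le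

section PseudoMetricSpace

variable {X : Type*} [PseudoMetricSpace X]

theorem lipschitzOnWith_of_dist_eq_abs_sub_mul {γ : ℝ → X} {I : Set ℝ} {D : ℝ} (hD : 0 ≤ D)
    (hγ : ∀ s ∈ I, ∀ t ∈ I, dist (γ s) (γ t) = |s - t| * D) :
    LipschitzOnWith D.toNNReal γ I :=
  LipschitzOnWith.of_dist_le_mul fun s hs t ht => by
    rw [hγ s hs t ht, Real.dist_eq, Real.coe_toNNReal D hD, mul_comm]

variable {V : Set X} {u : X → ℝ} {M : ℝ} {γ : ℝ → X} {D a b : ℝ}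

theorem abs_sub_le_mul_of_forall_Ico_mem (hu : ContinuousOn u (closure V))
    (hpt : ∀ z ∈ V, ∀ᶠ w in 𝓝 z, |u w - u z| ≤ M * dist w z) (hD : 0 ≤ D) (hab : a ≤ b)
    (hγ : ∀ s ∈ Icc a b, ∀ t ∈ Icc a b, dist (γ s) (γ t) = |s - t| * D)
    (hin : ∀ t ∈ Ico a b, γ t ∈ V) (hb : γ b ∈ closure V) :
    |u (γ b) - u (γ a)| ≤ M * (b - a) * D := by
  have hγc := (lipschitzOnWith_of_dist_eq_abs_sub_mul hD hγ).continuousOn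
  have hmaps : MapsTo γ (Icc a b) (closure V) := fun t ht =>
    ht.2.eq_or_lt.elim (fun h => h ▸ hb) fun h => subset_closure (hin t ⟨ht.1, h⟩)
  suffices hloc : ∀ t ∈ Ico a b, ∀ᶠ s in 𝓝[>] t, |u (γ s) - u (γ t)| ≤ M * D * (s - t) by
    have h := abs_sub_le_mul_of_eventually_nhdsGT (hu.comp hγc hmaps) hloc ⟨hab, le_rfl⟩
    simp only [Function.comp_apply] at h
    linarith
  intro t ht
  have hIcc : Icc a b ∈ 𝓝[>] t := mem_of_superset (Ioo_mem_nhdsGT ht.2)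
    (Ioo_subset_Icc_self.trans (Icc_subset_Icc_left ht.1))
  have hlim : Tendsto γ (𝓝[>] t) (𝓝 (γ t)) :=
    ((hγc t (Ico_subset_Icc_self ht)).mono_of_mem_nhdsWithin hIcc).tendsto
  filter_upwards [hlim.eventually (hpt _ (hin t ht)), hIcc, self_mem_nhdsWithin] with s hs hsI hts
  rw [hγ s hsI t (Ico_subset_Icc_self ht), abs_of_pos (sub_pos.2 (show t < s from hts))] at hs
  linarith

theorem exists_mem_frontier_abs_sub_le (hV : IsOpen V) (hu : ContinuousOn u (closure V))
    (hpt : ∀ z ∈ V, ∀ᶠ w in 𝓝 z, |u w - u z| ≤ M * dist w z) (hD : 0 ≤ D) (hab : a ≤ b)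
    (hγ : ∀ s ∈ Icc a b, ∀ t ∈ Icc a b, dist (γ s) (γ t) = |s - t| * D)
    (ha : γ a ∈ V) (hb : γ b ∉ V) :
    ∃ c ∈ Ioc a b, γ c ∈ frontier V ∧ |u (γ c) - u (γ a)| ≤ M * (c - a) * D := by
  obtain ⟨c, hc, hcV, hin⟩ := exists_mem_Ioc_mem_frontier_of_mem_of_notMem hV hab
    (lipschitzOnWith_of_dist_eq_abs_sub_mul hD hγ).continuousOn ha hb
  have hsub : Icc a c ⊆ Icc a b := Icc_subset_Icc_right hc.2
  exact ⟨c, hc, hcV, abs_sub_le_mul_of_forall_Ico_mem hu hpt hD hc.1.le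
    (fun s hs t ht => hγ s (hsub hs) t (hsub ht)) hin (frontier_subset_closure hcV)⟩

theorem dist_comp_one_sub_eq_abs_sub_mul
    (hγ : ∀ s ∈ Icc (0 : ℝ) 1, ∀ t ∈ Icc (0 : ℝ) 1, dist (γ s) (γ t) = |s - t| * D) :
    ∀ s ∈ Icc (0 : ℝ) 1, ∀ t ∈ Icc (0 : ℝ) 1, dist (γ (1 - s)) (γ (1 - t)) = |s - t| * D :=
  fun s hs t ht => by
    rw [hγ _ ⟨by linarith [hs.2], by linarith [hs.1]⟩ _ ⟨by linarith [ht.2], by linarith [ht.1]⟩,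
      ← abs_neg, neg_sub, sub_sub_sub_cancel_left]

theorem abs_sub_le_mul_along_geodesic {L : ℝ} (hV : IsOpen V) (hu : ContinuousOn u (closure V))
    (hpt : ∀ z ∈ V, ∀ᶠ w in 𝓝 z, |u w - u z| ≤ M * dist w z) (hLM : L ≤ M)
    (hfr : ∀ p ∈ frontier V, ∀ q ∈ frontier V, |u p - u q| ≤ L * dist p q) (hD : 0 ≤ D)
    (hγ : ∀ s ∈ Icc (0 : ℝ) 1, ∀ t ∈ Icc (0 : ℝ) 1, dist (γ s) (γ t) = |s - t| * D)
    (h0 : γ 0 ∈ V) (h1 : γ 1 ∈ V) : |u (γ 0) - u (γ 1)| ≤ M * D := by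
  by_cases hstay : ∀ t ∈ Icc (0 : ℝ) 1, γ t ∈ V
  · have h := abs_sub_le_mul_of_forall_Ico_mem hu hpt hD zero_le_one hγ
      (fun t ht => hstay t (Ico_subset_Icc_self ht)) (subset_closure h1)
    rw [abs_sub_comm] at h
    linarith
  push Not at hstay
  obtain ⟨t₁, ht₁, hout⟩ := hstay
  have hsub : Icc 0 t₁ ⊆ Icc 0 1 := Icc_subset_Icc_right ht₁.2
  have hsub' : Icc 0 (1 - t₁) ⊆ Icc 0 1 := Icc_subset_Icc_right (by linarith [ht₁.1])
  obtain ⟨a, ha, haV, hxa⟩ := exists_mem_frontier_abs_sub_le hV hu hpt hD ht₁.1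
    (fun s hs t ht => hγ s (hsub hs) t (hsub ht)) h0 hout
  obtain ⟨b, hb, hbV, hyb⟩ := exists_mem_frontier_abs_sub_le (γ := fun s => γ (1 - s)) hV hu hpt
    hD (sub_nonneg.2 ht₁.2)
    (fun s hs t ht => dist_comp_one_sub_eq_abs_sub_mul hγ s (hsub' hs) t (hsub' ht))
    (by simpa using h1) (by simpa using hout)
  simp only [sub_zero] at hxa hyb
  have hba : 0 ≤ 1 - b - a := by linarith [ha.2, hb.2]
  have hmid : |u (γ a) - u (γ (1 - b))| ≤ L * ((1 - b - a) * D) := by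
    have h := hfr _ haV _ hbV
    rwa [hγ _ (hsub ⟨ha.1.le, ha.2⟩) _ ⟨by linarith [hb.2, ht₁.1], by linarith [hb.1]⟩,
      abs_sub_comm a, abs_of_nonneg hba] at h
  calc |u (γ 0) - u (γ 1)|
      ≤ |u (γ 0) - u (γ a)| + (|u (γ a) - u (γ (1 - b))| + |u (γ (1 - b)) - u (γ 1)|) :=
        (abs_sub_le _ _ _).trans (add_le_add_right (abs_sub_le _ _ _) _)
    _ ≤ M * a * D + (L * ((1 - b - a) * D) + M * b * D) := by
        rw [abs_sub_comm (u (γ 0))]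
        gcongr
    _ ≤ M * D := by nlinarith [mul_nonneg (mul_nonneg (sub_nonneg.2 hLM) hba) hD]

end PseudoMetricSpace

theorem stmt12_general {X : Type*} [MetricSpace X]
    (hgeo : ∀ x y : X, ∃ γ : ℝ → X, γ 0 = x ∧ γ 1 = y ∧
      ∀ s ∈ Icc (0 : ℝ) 1, ∀ t ∈ Icc (0 : ℝ) 1, dist (γ s) (γ t) = |s - t| * dist x y)
    (U V : Set X) (hV : IsOpen V)
    (hVU : closure V ⊆ U)
    (u : X → ℝ)
    (huloc : ∀ x ∈ U, ∃ K : NNReal, ∃ s ∈ nhds x, LipschitzOnWith K u s)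
    (L : ℝ)
    (hL : IsLUB {r : ℝ | ∃ p ∈ frontier V, ∃ q ∈ frontier V, r = |u p - u q| / dist p q} L)
    (hptwise : ∀ x ∈ V,
      Filter.limsup (fun y => |u y - u x| / dist y x) (nhdsWithin x {x}ᶜ) ≤ L) :
    ∀ x ∈ V, ∀ y ∈ V, |u x - u y| ≤ L * dist x y := by
  have hu : ContinuousOn u (closure V) := LocallyLipschitzOn.continuousOn (fun z hz => by
    obtain ⟨K, s, hs, hK⟩ := huloc z (hVU hz)
    exact ⟨K, s, mem_nhdsWithin_of_mem_nhds hs, hK⟩)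
  intro x hx y hy
  refine le_mul_of_forall_lt_imp_le_mul fun M hLM => ?_
  have hpt : ∀ z ∈ V, ∀ᶠ w in 𝓝 z, |u w - u z| ≤ M * dist w z := fun z hz => by
    obtain ⟨K, s, hs, hK⟩ := huloc z (hVU (subset_closure hz))
    exact eventually_abs_sub_le_mul_dist_of_limsup_lt hs hK ((hptwise z hz).trans_lt hLM)
  obtain ⟨γ, rfl, rfl, hγ⟩ := hgeo x y
  exact abs_sub_le_mul_along_geodesic hV hu hpt hLM.le
    (fun p hp q hq => abs_sub_le_mul_dist_of_mem_upperBounds hL.1 hp hq) dist_nonneg hγ hx hy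

/-- in a geodesic metric space, if `u` is locally Lipschitz on `U`,
`V` is bounded open with `closure V ⊆ U`, `L` is the Lipschitz constant of `u` on
`∂V`, and the pointwise Lipschitz constant of `u` is at most `L` at every point of
`V`, then `u` is `L`-Lipschitz on `V`. -/
theorem stmt12 {X : Type*} [MetricSpace X]
    (hgeo : ∀ x y : X, ∃ γ : ℝ → X, γ 0 = x ∧ γ 1 = y ∧
      ∀ s ∈ Icc (0 : ℝ) 1, ∀ t ∈ Icc (0 : ℝ) 1, dist (γ s) (γ t) = |s - t| * dist x y)
    (U V : Set X) (hU : IsOpen U) (hV : IsOpen V) (hVb : Bornology.IsBounded V)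
    (hVU : closure V ⊆ U) (hbd : (frontier V).Nonempty)
    (u : X → ℝ)
    (huloc : ∀ x ∈ U, ∃ K : NNReal, ∃ s ∈ nhds x, LipschitzOnWith K u s)
    (L : ℝ)
    (hL : IsLUB {r : ℝ | ∃ p ∈ frontier V, ∃ q ∈ frontier V, r = |u p - u q| / dist p q} L)
    (hptwise : ∀ x ∈ V,
      Filter.limsup (fun y => |u y - u x| / dist y x) (nhdsWithin x {x}ᶜ) ≤ L) :
    ∀ x ∈ V, ∀ y ∈ V, |u x - u y| ≤ L * dist x y :=
  stmt12_general hgeo U V hV hVU u huloc L hL hptwise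
end
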